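/- Let G be the complete directed graph on n ≥ 2 vertices with source s, and let S be a valid relaxation sequence for G. Then for every edge-weight function w with no negative directed cycle (every directed cycle has nonnegative total weight), after processing S by relaxations the tentative distance d(v) equals the minimum total weight of a simple path from s to v, for every vertex v. -/

import Mathlib

/-- `S` is a valid relaxation sequence for the complete directed graph on vertex
type `α` with source `s`: `S` contains (as a subsequence, in order but not
necessarily contiguously) the edge sequence of every simple path starting at `s`. -/
def IsValidRelaxSeq {α : Type*} (s : α) (S : List (α × α)) : Prop :=
  ∀ p : List α, p ≠ [] → p.head? = some s → p.Nodup → (p.zip p.tail).Sublist S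

/-- Relaxing edge `e = (u, v)`: replace `d v` by `min (d v) (d u + w e)`. -/
noncomputable def relaxStep {α : Type*} [DecidableEq α] (w : α × α → ℝ) (d : α → EReal)
    (e : α × α) : α → EReal :=
  fun v => if v = e.2 then min (d v) (d e.1 + (w e : EReal)) else d v

/-- Processing a sequence of edges by relaxations, in order. -/
noncomputable def relaxList {α : Type*} [DecidableEq α] (w : α × α → ℝ) (d : α → EReal)
    (S : List (α × α)) : α → EReal :=
  S.foldl (relaxStep w) d

/-- Initial tentative distances: `d s = 0` and `d v = +∞` for `v ≠ s`. -/
noncomputable def initD {α : Type*} [DecidableEq α] (s : α) : α → EReal :=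
  fun v => if v = s then 0 else ⊤

open List

lemma zip_tail_concat {α : Type*} : ∀ (p : List α) (hp : p ≠ []) (x : α),
    (p ++ [x]).zip (p ++ [x]).tail = p.zip p.tail ++ [(p.getLast hp, x)]
  | [a], _, x => rfl
  | a :: b :: q, _, x => by
    have ih := zip_tail_concat (b :: q) (by simp) x
    simp only [cons_append, zip_cons_cons, tail_cons] at *
    rw [ih]
    simp [List.getLast_cons]

lemma edges_append {α : Type*} : ∀ (l₁ l₂ : List α) (h₂ : l₂ ≠ []),
    (l₁ ++ l₂).zip (l₁ ++ l₂).tail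
      = (l₁ ++ [l₂.head h₂]).zip (l₁ ++ [l₂.head h₂]).tail ++ l₂.zip l₂.tail
  | [], b :: t, _ => by simp
  | [a], b :: t, _ => by simp
  | a :: c :: l₁, l₂, h₂ => by
    have ih := edges_append (c :: l₁) l₂ h₂
    simp only [cons_append, zip_cons_cons, tail_cons] at *
    rw [ih]

lemma head?_append_left {α : Type*} (l l' : List α) (h : l ≠ []) :
    (l ++ l').head? = l.head? := by cases l with
  | nil => exact absurd rfl h
  | cons a t => simp

lemma sublist_concat_split {α : Type*} {l S : List α} (h : l.Sublist S) :
    ∀ A (e : α), l = A ++ [e] → ∃ S₁ S₂, S = S₁ ++ e :: S₂ ∧ A.Sublist S₁ := by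
  induction h with
  | slnil => intro A e hAe; exact absurd hAe.symm (by simp)
  | cons a h ih =>
      intro A e hAe
      obtain ⟨S₁, S₂, rfl, hA⟩ := ih A e hAe
      exact ⟨a :: S₁, S₂, rfl, hA.cons a⟩
  | cons_cons a h ih =>
      intro A e hAe
      cases A with
      | nil =>
          simp only [nil_append, cons.injEq] at hAe
          obtain ⟨rfl, rfl⟩ := hAe
          exact ⟨[], _, rfl, nil_sublist _⟩
      | cons a' A' =>
          simp only [cons_append, cons.injEq] at hAe
          obtain ⟨rfl, hAe⟩ := hAe
          obtain ⟨S₁, S₂, rfl, hA⟩ := ih A' e hAe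
          exact ⟨a :: S₁, S₂, rfl, hA.cons_cons a⟩

lemma exists_path_extend {n : ℕ} (s : Fin n) (w : Fin n × Fin n → ℝ)
    (hw : ∀ p : List (Fin n), 2 ≤ p.length → p.head? = p.getLast? →
      p.dropLast.Nodup → p.Chain' (· ≠ ·) → 0 ≤ ((p.zip p.tail).map w).sum)
    (p : List (Fin n)) (hp : p ≠ []) (hhead : p.head? = some s) (hnd : p.Nodup)
    (u x : Fin n) (hlast : p.getLast? = some u) (hux : u ≠ x) :
    ∃ q : List (Fin n), q ≠ [] ∧ q.head? = some s ∧ q.getLast? = some x ∧ q.Nodup ∧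
      ((q.zip q.tail).map w).sum ≤ ((p.zip p.tail).map w).sum + w (u, x) := by
  have hu : p.getLast hp = u := by
    rw [List.getLast?_eq_getLast hp] at hlast; exact Option.some.inj hlast
  by_cases hx : x ∈ p
  · obtain ⟨a, b, rfl⟩ := List.append_of_mem hx
    have hb : b ≠ [] := by
      rintro rfl
      have h2 : (a ++ [x]).getLast? = some x := List.getLast?_concat
      rw [hlast] at h2
      exact hux (Option.some.inj h2)
    set q : List (Fin n) := a ++ [x] with hq
    have hpq : a ++ x :: b = q ++ b := by simp [hq]
    have hqne : q ≠ [] := by simp [hq]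
    refine ⟨q, hqne, ?_, List.getLast?_concat, ?_, ?_⟩
    · rw [← hhead, hpq, head?_append_left _ _ hqne]
    · exact hnd.sublist (by rw [hpq]; exact List.sublist_append_left q b)
    · -- cost estimate via the cycle (x :: b) ++ [x]
      have hnodxb : (x :: b).Nodup := hnd.sublist (List.sublist_append_right a (x :: b))
      have hsplit := edges_append q b hb
      have hq1 := zip_tail_concat q hqne (b.head hb)
      have hqlast : q.getLast hqne = x := by simp [hq]
      have hxb : (x :: b).zip (x :: b).tail = (x, b.head hb) :: b.zip b.tail := by
        cases b with
        | nil => exact absurd rfl hb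
        | cons c t => simp
      have hlastxb : (x :: b).getLast (by simp) = u := by
        rw [← hu]
        exact (List.getLast_append_of_ne_nil _ (by simp)).symm
      have hcyc := zip_tail_concat (x :: b) (by simp) x
      have h0 : 0 ≤ ((((x :: b) ++ [x]).zip ((x :: b) ++ [x]).tail).map w).sum := by
        apply hw
        · simp
        · rw [List.getLast?_concat]; simp
        · rw [List.dropLast_concat]; exact hnodxb
        · change List.IsChain _ _; rw [List.isChain_append]
          refine ⟨List.Pairwise.isChain hnodxb, List.isChain_singleton x, ?_⟩
          intro y hy z hz
          rw [List.getLast?_eq_getLast (l := x :: b) (by simp), hlastxb] at hy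
          simp at hy hz
          rw [← hy, ← hz]; exact hux
      rw [hcyc, hxb, hlastxb] at h0
      rw [hpq, hsplit, hq1, hqlast]
      simp only [List.map_append, List.sum_append, List.map_cons, List.sum_cons,
        List.map_nil, List.sum_nil] at h0 ⊢
      linarith
  · refine ⟨p ++ [x], by simp, ?_, List.getLast?_concat, ?_, ?_⟩
    · rw [head?_append_left _ _ hp]; exact hhead
    · rw [List.nodup_append]; exact ⟨hnd, List.nodup_singleton x, by intro a ha b hb; simp at hb; subst hb; intro h; exact hx (h ▸ ha)⟩
    · rw [zip_tail_concat p hp x, hu]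
      simp

lemma relaxStep_le {α : Type*} [DecidableEq α] (w : α × α → ℝ) (d : α → EReal)
    (e : α × α) (v : α) : relaxStep w d e v ≤ d v := by
  unfold relaxStep
  split
  · exact min_le_left _ _
  · exact le_rfl

lemma relaxList_le_self {α : Type*} [DecidableEq α] (w : α × α → ℝ) :
    ∀ (S : List (α × α)) (d : α → EReal) (v : α), relaxList w d S v ≤ d v := by
  intro S
  induction S with
  | nil => intro d v; exact le_rfl
  | cons e S ih =>
      intro d v
      exact le_trans (ih (relaxStep w d e) v) (relaxStep_le w d e v)

lemma relaxList_le_cost {n : ℕ} (s : Fin n) (w : Fin n × Fin n → ℝ) :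
    ∀ (p : List (Fin n)) (S : List (Fin n × Fin n)) (v : Fin n), p ≠ [] →
      p.head? = some s → p.getLast? = some v → (p.zip p.tail).Sublist S →
      relaxList w (initD s) S v ≤ ((((p.zip p.tail).map w).sum : ℝ) : EReal) := by
  intro p
  induction p using List.reverseRecOn with
  | nil => intro S v h; exact absurd rfl h
  | append_singleton l x ih =>
      intro S v _ hhead hlast hsub
      have hvx : v = x := by
        rw [List.getLast?_concat] at hlast; exact (Option.some.inj hlast).symm
      subst v
      rcases eq_or_ne l [] with rfl | hlne
      · have hs : x = s := by simpa using hhead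
        subst hs
        refine le_trans (relaxList_le_self w S _ _) ?_
        simp [initD]
      · rw [zip_tail_concat l hlne x] at hsub
        obtain ⟨S₁, S₂, rfl, hsub₁⟩ := sublist_concat_split hsub _ _ rfl
        have ihh := ih S₁ (l.getLast hlne) hlne
          (by rw [← hhead, head?_append_left _ _ hlne])
          (List.getLast?_eq_getLast hlne) hsub₁
        have key : relaxList w (initD s) (S₁ ++ (l.getLast hlne, x) :: S₂) x
            ≤ relaxList w (initD s) S₁ (l.getLast hlne) + (w (l.getLast hlne, x) : EReal) := by
          unfold relaxList
          rw [List.foldl_append, List.foldl_cons]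
          refine le_trans (relaxList_le_self w S₂ _ x) ?_
          unfold relaxStep
          simp only [if_pos rfl]
          exact min_le_right _ _
        refine le_trans key ?_
        refine le_trans (add_le_add_left ihh (w (l.getLast hlne, x) : EReal)) ?_
        rw [zip_tail_concat l hlne x, ← EReal.coe_add]
        simp

/-- Invariant: every finite tentative distance is witnessed by a simple path. -/
def GoodD {n : ℕ} (s : Fin n) (w : Fin n × Fin n → ℝ) (d : Fin n → EReal) : Prop :=
  ∀ u, d u ≠ ⊤ → ∃ p : List (Fin n), p ≠ [] ∧ p.head? = some s ∧ p.getLast? = some u ∧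
    p.Nodup ∧ ((((p.zip p.tail).map w).sum : ℝ) : EReal) ≤ d u

lemma goodD_initD {n : ℕ} (s : Fin n) (w : Fin n × Fin n → ℝ) : GoodD s w (initD s) := by
  intro u hu
  have hus : u = s := by
    by_contra h
    exact hu (by simp [initD, h])
  subst hus
  exact ⟨[u], by simp, by simp, by simp, by simp, by simp [initD]⟩

lemma goodD_relaxStep {n : ℕ} (s : Fin n) (w : Fin n × Fin n → ℝ)
    (hw : ∀ p : List (Fin n), 2 ≤ p.length → p.head? = p.getLast? →
      p.dropLast.Nodup → p.Chain' (· ≠ ·) → 0 ≤ ((p.zip p.tail).map w).sum)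
    (d : Fin n → EReal) (hd : GoodD s w d) (e : Fin n × Fin n) (he : e.1 ≠ e.2) :
    GoodD s w (relaxStep w d e) := by
  intro v hv
  unfold relaxStep at hv ⊢
  by_cases hve : v = e.2
  · simp only [if_pos hve] at hv ⊢
    by_cases h1 : d e.1 = ⊤
    · rw [h1, EReal.top_add_coe, min_eq_left le_top] at hv ⊢
      exact hd v hv
    · obtain ⟨p, hpne, hph, hpl, hpnd, hpc⟩ := hd e.1 h1
      obtain ⟨q, hqne, hqh, hql, hqnd, hqc⟩ :=
        exists_path_extend s w hw p hpne hph hpnd e.1 e.2 hpl he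
      rcases le_total (d v) (d e.1 + (w e : EReal)) with hmin | hmin
      · rw [min_eq_left hmin] at hv ⊢
        exact hd v hv
      · rw [min_eq_right hmin] at hv ⊢
        refine ⟨q, hqne, hqh, hve ▸ hql, hqnd, ?_⟩
        calc ((((q.zip q.tail).map w).sum : ℝ) : EReal)
            ≤ ((((p.zip p.tail).map w).sum + w (e.1, e.2) : ℝ) : EReal) := by
              exact_mod_cast hqc
          _ = ((((p.zip p.tail).map w).sum : ℝ) : EReal) + (w (e.1, e.2) : EReal) :=
              EReal.coe_add _ _
          _ ≤ d e.1 + (w e : EReal) := by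
              exact add_le_add_left hpc _
  · simp only [if_neg hve] at hv ⊢
    exact hd v hv

lemma goodD_relaxList {n : ℕ} (s : Fin n) (w : Fin n × Fin n → ℝ)
    (hw : ∀ p : List (Fin n), 2 ≤ p.length → p.head? = p.getLast? →
      p.dropLast.Nodup → p.Chain' (· ≠ ·) → 0 ≤ ((p.zip p.tail).map w).sum) :
    ∀ (S : List (Fin n × Fin n)), (∀ e ∈ S, e.1 ≠ e.2) → ∀ d, GoodD s w d →
      GoodD s w (relaxList w d S) := by
  intro S
  induction S with
  | nil => intro _ d hd; exact hd
  | cons e S ih =>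
      intro hSe d hd
      exact ih (fun f hf => hSe f (List.mem_cons_of_mem e hf))
        (relaxStep w d e) (goodD_relaxStep s w hw d hd e (hSe e (List.mem_cons_self)))

/-- If `S` is a valid relaxation sequence and `w` has no negative directed cycle
(a cycle being a closed walk with at least one edge, distinct consecutive vertices
and pairwise distinct intermediate vertices), then after processing `S` by
relaxations the tentative distance of each `v` equals the minimum total weight of
a simple path from `s` to `v`. -/
theorem stmt_7 {n : ℕ} (hn : 2 ≤ n) (s : Fin n)
    (S : List (Fin n × Fin n)) (hSe : ∀ e ∈ S, e.1 ≠ e.2)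
    (hS : IsValidRelaxSeq s S)
    (w : Fin n × Fin n → ℝ)
    (hw : ∀ p : List (Fin n), 2 ≤ p.length → p.head? = p.getLast? →
      p.dropLast.Nodup → p.Chain' (· ≠ ·) → 0 ≤ ((p.zip p.tail).map w).sum)
    (v : Fin n) :
    relaxList w (initD s) S v =
      sInf {c : EReal | ∃ p : List (Fin n),
        p ≠ [] ∧ p.head? = some s ∧ p.getLast? = some v ∧ p.Nodup ∧
        c = ((((p.zip p.tail).map w).sum : ℝ) : EReal)} := by
  apply _root_.le_antisymm
  · apply le_sInf
    rintro c ⟨p, hpne, hph, hpl, hpnd, rfl⟩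
    exact relaxList_le_cost s w p S v hpne hph hpl (hS p hpne hph hpnd)
  · have hgood := goodD_relaxList s w hw S hSe (initD s) (goodD_initD s w)
    by_cases hv : relaxList w (initD s) S v = ⊤
    · rw [hv]; exact le_top
    · obtain ⟨p, hpne, hph, hpl, hpnd, hpc⟩ := hgood v hv
      exact le_trans (sInf_le ⟨p, hpne, hph, hpl, hpnd, rfl⟩) hpc
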